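/- arXiv:math/0409217 — 6 statements merged into one kernel-verified Lean document; each statement's English description precedes it below -/
import Mathlib

section
/- Let X be an infinite set and let G be a submonoid of the monoid of all functions X → X (under composition, with identity) which is closed under conjugation by bijections (i.e., for every g ∈ G and every bijection γ : X → X, γ⁻¹ ∘ g ∘ γ ∈ G). Then for any permutation α of X, the submonoid generated by G ∪ {α} equals {αⁿ ∘ g : g ∈ G, n ≥ 0}. -/
/-!
Conjugation invariance lets an element of `G` be moved past `α`: `g * α = α * (α⁻¹ * g * α)`.
Hence every word in `G ∪ {α}` can be rewritten with all occurrences of `α` on the left, giving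
the normal form `αⁿ * g` with `g ∈ G`.
-/

namespace Submonoid

variable {M : Type*} [Monoid M] {S : Submonoid M} {u : Mˣ}

theorem exists_mul_pow_eq_pow_mul (hS : ∀ g ∈ S, ↑u⁻¹ * g * ↑u ∈ S) {g : M} (hg : g ∈ S)
    (n : ℕ) : ∃ g' ∈ S, g * (u : M) ^ n = (u : M) ^ n * g' := by
  induction n with
  | zero => exact ⟨g, hg, by simp⟩
  | succ n ih =>
    obtain ⟨g', hg', h⟩ := ih
    refine ⟨↑u⁻¹ * g' * ↑u, hS g' hg', ?_⟩
    rw [pow_succ, ← mul_assoc, h, mul_assoc, mul_assoc, ← mul_assoc (u : M), ← mul_assoc (u : M),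
      Units.mul_inv, one_mul, ← mul_assoc]

theorem closure_union_singleton_unit (hS : ∀ g ∈ S, ↑u⁻¹ * g * ↑u ∈ S) :
    (closure ((S : Set M) ∪ {(u : M)}) : Set M) = {f | ∃ g ∈ S, ∃ n : ℕ, f = (u : M) ^ n * g} := by
  ext f
  constructor
  · intro hf
    induction hf using closure_induction with
    | mem x hx =>
      rcases hx with hx | rfl
      · exact ⟨x, hx, 0, by simp⟩
      · exact ⟨1, S.one_mem, 1, by simp⟩
    | one => exact ⟨1, S.one_mem, 0, by simp⟩
    | mul x y _ _ hx hy =>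
      obtain ⟨g, hg, n, rfl⟩ := hx
      obtain ⟨h, hh, m, rfl⟩ := hy
      obtain ⟨g', hg', hswap⟩ := exists_mul_pow_eq_pow_mul hS hg m
      refine ⟨g' * h, S.mul_mem hg' hh, n + m, ?_⟩
      rw [mul_assoc, ← mul_assoc g, hswap, pow_add, mul_assoc, mul_assoc]
  · rintro ⟨g, hg, n, rfl⟩
    have hu : (u : M) ∈ closure ((S : Set M) ∪ {(u : M)}) := subset_closure (Or.inr rfl)
    exact mul_mem (pow_mem hu n) (subset_closure (Or.inl hg))

end Submonoid

theorem stmt_0_general {X : Type*} (G : Set (Function.End X))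
    (hid : (1 : Function.End X) ∈ G)
    (hcomp : ∀ f ∈ G, ∀ g ∈ G, f * g ∈ G)
    (hconj : ∀ g ∈ G, ∀ γ : Equiv.Perm X,
      ((⇑γ.symm ∘ g ∘ ⇑γ : X → X) : Function.End X) ∈ G)
    (α : Equiv.Perm X) :
    (Submonoid.closure (G ∪ {(⇑α : Function.End X)}) : Set (Function.End X)) =
      {f | ∃ g ∈ G, ∃ n : ℕ, f = (show Function.End X from ⇑α) ^ n * g} := by
  let S : Submonoid (Function.End X) :=
    { carrier := G
      one_mem' := hid
      mul_mem' := fun hf hg => hcomp _ hf _ hg }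
  exact Submonoid.closure_union_singleton_unit (S := S) (u := Equiv.Perm.equivUnitsEnd α)
    fun g hg => hconj g hg α

theorem stmt_0 {X : Type*} [Infinite X] (G : Set (Function.End X))
    (hid : (1 : Function.End X) ∈ G)
    (hcomp : ∀ f ∈ G, ∀ g ∈ G, f * g ∈ G)
    (hconj : ∀ g ∈ G, ∀ γ : Equiv.Perm X,
      ((⇑γ.symm ∘ g ∘ ⇑γ : X → X) : Function.End X) ∈ G)
    (α : Equiv.Perm X) :
    (Submonoid.closure (G ∪ {(⇑α : Function.End X)}) : Set (Function.End X)) =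
      {f | ∃ g ∈ G, ∃ n : ℕ, f = (show Function.End X from ⇑α) ^ n * g} :=
  stmt_0_general G hid hcomp hconj α
end

section
/- Let X be an infinite set and S ⊆ X a subset with |X \ S| = |X| (S is co-large). Then for every function f : X → X there exists a function g : X → X such that g agrees with f on S and every fiber of g is large, i.e., |g⁻¹({y})| = |X| for all y ∈ X; in particular g is surjective and generous. -/
/-!
Since `X` is infinite, `#Sᶜ = #X = #(X × X)`, so `Sᶜ` can be split into `#X` many pieces of size
`#X`, indexed by `X`. Keep `f` on `S` and send the `y`-th piece to `y`.
-/

open Cardinal Function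

universe u

theorem Cardinal.exists_mk_preimage_singleton_eq_of_mk_eq_mul {α β γ : Type u}
    (h : #α = #β * #γ) : ∃ p : α → β, ∀ b, #(p ⁻¹' {b}) = #γ := by
  obtain ⟨e⟩ := Cardinal.eq.mp (h.trans (mul_def β γ))
  refine ⟨Prod.fst ∘ e, fun b => ?_⟩
  rw [Set.preimage_comp, mk_preimage_equiv, Set.preimage_fst_singleton_eq_range,
    mk_range_eq _ (Prod.mk_right_injective b)]

theorem Cardinal.mk_preimage_singleton_le_mk_preimage_extend {α β γ : Type u} {i : α → β}
    (hi : Injective i) (p : α → γ) (f : β → γ) (c : γ) :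
    #(p ⁻¹' {c}) ≤ #(extend i p f ⁻¹' {c}) := by
  rw [← mk_image_eq hi]
  refine mk_le_mk_of_subset ?_
  rintro _ ⟨a, ha, rfl⟩
  simpa [hi.extend_apply] using ha

theorem stmt_5 {X : Type*} [Infinite X] (S : Set X) (hS : #(Sᶜ : Set X) = #X)
    (f : X → X) :
    ∃ g : X → X, (∀ x ∈ S, g x = f x) ∧ (∀ y : X, #(g ⁻¹' {y}) = #X) ∧
      Function.Surjective g := by
  obtain ⟨p, hp⟩ := exists_mk_preimage_singleton_eq_of_mk_eq_mul (β := X) (γ := X)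
    (hS.trans (mul_eq_self (aleph0_le_mk X)).symm)
  set g := extend (Subtype.val : (Sᶜ : Set X) → X) p f
  have hg_fiber (y : X) : #(g ⁻¹' {y}) = #X :=
    le_antisymm (mk_set_le _)
      ((hp y).ge.trans
        (mk_preimage_singleton_le_mk_preimage_extend Subtype.val_injective p f y))
  refine ⟨g, fun x hx => extend_apply' _ _ _ ?_, hg_fiber, fun y => ?_⟩
  · rintro ⟨⟨x', hx'⟩, rfl⟩
    exact hx' hx
  · exact mk_set_ne_zero_iff.mp ((hg_fiber y).trans_ne (mk_ne_zero X))
end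

section
/- Let X be an infinite set of cardinality κ and let f, g : X → X be surjective functions all of whose fibers have cardinality κ (generous surjections). Suppose that for every p ≥ 0, f and g have the same number of p-snails (connected components of cycle-type p). Then there exists a bijection γ of X with f = γ⁻¹ ∘ g ∘ γ. -/
open Cardinal

/-- Cycle-type of a point in the functional graph of `f`. -/
def CycleType {X : Type*} (f : X → X) (x : X) (p : ℕ) : Prop :=
  (p = 0 ∧ Function.Injective fun n : ℕ => f^[n] x) ∨
  (1 ≤ p ∧ (∃ n : ℕ, f^[n] x = f^[n + p] x) ∧
    ∀ q : ℕ, 1 ≤ q → q < p → ¬∃ n : ℕ, f^[n] x = f^[n + q] x)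

/-- Connectedness in the functional graph of `f` (smallest equivalence relation
containing `{(x, f x)}`). -/
def Conn {X : Type*} (f : X → X) : X → X → Prop :=
  Relation.EqvGen fun a b => f a = b

/-- The set of `p`-snails of `f`: connected components of the functional graph of
`f` whose points have cycle-type `p`. -/
def Snails {X : Type*} (f : X → X) (p : ℕ) : Set (Set X) :=
  {C | ∃ x : X, C = {y | Conn f x y} ∧ CycleType f x p}

section AuxAll
variable {X : Type*} (f : X → X)

lemma conn_refl (x : X) : Conn f x x := Relation.EqvGen.refl x
lemma conn_symm {x y : X} (h : Conn f x y) : Conn f y x := Relation.EqvGen.symm _ _ h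
lemma conn_trans {x y z : X} (h : Conn f x y) (h' : Conn f y z) : Conn f x z :=
  Relation.EqvGen.trans _ _ _ h h'
lemma conn_f (x : X) : Conn f x (f x) := Relation.EqvGen.rel _ _ rfl
lemma conn_iterate (x : X) (n : ℕ) : Conn f x (f^[n] x) := by
  induction n with
  | zero => exact conn_refl f x
  | succ n ih =>
    refine conn_trans f ih ?_
    rw [Function.iterate_succ_apply']
    exact conn_f f _

lemma conn_iff {x y : X} : Conn f x y ↔ ∃ a b : ℕ, f^[a] x = f^[b] y := by
  constructor
  · intro h
    induction h with
    | rel a b hab => exact ⟨1, 0, hab⟩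
    | refl a => exact ⟨0, 0, rfl⟩
    | symm a b _ ih => obtain ⟨m, n, h⟩ := ih; exact ⟨n, m, h.symm⟩
    | trans a b c _ _ ih₁ ih₂ =>
      obtain ⟨m, n, h₁⟩ := ih₁
      obtain ⟨k, l, h₂⟩ := ih₂
      refine ⟨k + m, n + l, ?_⟩
      rw [Function.iterate_add_apply, h₁, ← Function.iterate_add_apply,
        Nat.add_comm k n, Function.iterate_add_apply, h₂, ← Function.iterate_add_apply,
        Nat.add_comm n l]
  · rintro ⟨a, b, h⟩
    exact conn_trans f (conn_iterate f x a) (h ▸ conn_symm f (conn_iterate f y b))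

/-- transfer of eventual periodicity along meeting orbits -/
lemma per_transfer {x y : X} {a b p : ℕ} (hab : f^[a] x = f^[b] y)
    (h : ∃ n, f^[n] y = f^[n + p] y) : ∃ n, f^[n] x = f^[n + p] x := by
  obtain ⟨m, hm⟩ := h
  have key : ∀ k : ℕ, f^[m + k] y = f^[m + k + p] y := by
    intro k
    have := congrArg (f^[k]) hm
    rw [← Function.iterate_add_apply, ← Function.iterate_add_apply] at this
    calc f^[m + k] y = f^[k + m] y := by rw [Nat.add_comm]
    _ = f^[k + (m + p)] y := this
    _ = f^[m + k + p] y := by ring_nf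
  have h1 : ∀ k : ℕ, f^[k + a] x = f^[k + b] y := by
    intro k
    rw [Function.iterate_add_apply, Function.iterate_add_apply, hab]
  refine ⟨m + a, ?_⟩
  calc f^[m + a] x = f^[m + b] y := h1 m
  _ = f^[m + b + p] y := key b
  _ = f^[m + p + b] y := by ring_nf
  _ = f^[m + p + a] x := (h1 (m + p)).symm
  _ = f^[m + a + p] x := by ring_nf

lemma inj_iff_not_per (x : X) :
    (Function.Injective fun n : ℕ => f^[n] x) ↔
      ∀ q : ℕ, 1 ≤ q → ¬∃ n : ℕ, f^[n] x = f^[n + q] x := by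
  constructor
  · rintro hinj q hq ⟨n, hn⟩
    have := hinj hn
    omega
  · intro h n n' hnn
    by_contra hne
    rcases Nat.lt_or_ge n n' with hlt | hge
    · exact h (n' - n) (by omega) ⟨n, by rw [show n + (n' - n) = n' by omega]; exact hnn⟩
    · have hlt : n' < n := by omega
      exact h (n - n') (by omega) ⟨n', by rw [show n' + (n - n') = n by omega]; exact hnn.symm⟩

open scoped Classical in
lemma cycleType_exists (x : X) : ∃ p, CycleType f x p := by
  by_cases h : Function.Injective fun n : ℕ => f^[n] x
  · exact ⟨0, Or.inl ⟨rfl, h⟩⟩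
  · have hQ : ∃ q : ℕ, 1 ≤ q ∧ ∃ n : ℕ, f^[n] x = f^[n + q] x := by
      by_contra hc
      push_neg at hc
      exact h ((inj_iff_not_per f x).mpr fun q hq => by simpa using hc q hq)
    refine ⟨Nat.find hQ, Or.inr ⟨(Nat.find_spec hQ).1, (Nat.find_spec hQ).2, ?_⟩⟩
    intro q h1 hlt hP
    exact Nat.find_min hQ hlt ⟨h1, hP⟩

lemma cycleType_unique {x : X} {p q : ℕ} (hp : CycleType f x p) (hq : CycleType f x q) :
    p = q := by
  rcases hp with ⟨hp0, hinj⟩ | ⟨hp1, hPp, hminp⟩ <;> rcases hq with ⟨hq0, _⟩ | ⟨hq1, hPq, hminq⟩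
  · omega
  · exact absurd hPq ((inj_iff_not_per f x).mp hinj q hq1)
  · exact absurd hPp ((inj_iff_not_per f x).mp ‹_› p hp1)
  · rcases Nat.lt_trichotomy p q with h | h | h
    · exact absurd hPp (hminq p hp1 h)
    · exact h
    · exact absurd hPq (hminp q hq1 h)

lemma cycleType_conn {x y : X} {p : ℕ} (h : Conn f x y) (hx : CycleType f x p) :
    CycleType f y p := by
  obtain ⟨a, b, hab⟩ := (conn_iff f).mp h
  rcases hx with ⟨hp0, hinj⟩ | ⟨hp1, hP, hmin⟩
  · refine Or.inl ⟨hp0, (inj_iff_not_per f y).mpr ?_⟩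
    intro q hq hPy
    exact (inj_iff_not_per f x).mp hinj q hq (per_transfer f hab hPy)
  · refine Or.inr ⟨hp1, per_transfer f hab.symm hP, ?_⟩
    intro q h1 hlt hPy
    exact hmin q h1 hlt (per_transfer f hab hPy)

lemma conn_class_eq {x y : X} (h : Conn f x y) : {z | Conn f x z} = {z | Conn f y z} :=
  Set.ext fun z => ⟨fun hz => Relation.EqvGen.trans _ _ _ (Relation.EqvGen.symm _ _ h) hz,
    fun hz => Relation.EqvGen.trans _ _ _ h hz⟩

end AuxAll

lemma mk_diff_eq {X : Type*} [Infinite X] (A B : Set X) (hA : #A = #X)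
    (h : (A ∩ B).Subsingleton) : #(A \ B : Set X) = #X := by
  have h1 : #(A \ (A ∩ B) : Set X) + #(A ∩ B : Set X) = #A :=
    Cardinal.mk_diff_add_mk Set.inter_subset_left
  rw [Set.diff_self_inter, hA] at h1
  have h2 : #(A ∩ B : Set X) < #X :=
    lt_of_le_of_lt (Cardinal.mk_le_one_iff_set_subsingleton.mpr h)
      (lt_of_lt_of_le Cardinal.one_lt_aleph0 (Cardinal.aleph0_le_mk X))
  exact Cardinal.eq_of_add_eq_of_aleph0_le (by rw [add_comm]; exact h1) h2
    (Cardinal.aleph0_le_mk X)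

def mstep {I X : Type*} (σ : I → I) : I × List X → I × List X
  | (i, []) => (σ i, [])
  | (i, _ :: l) => (i, l)

noncomputable def buildE {X I : Type*} {C : Set X} (sC : I → C) (F : C → X → C) :
    List X → I → C
  | [], i => sC i
  | a :: l, i => F (buildE sC F l i) a

lemma component_equiv {X I : Type*} [Infinite X] (f : X → X) (hgenX : ∀ y, #(f ⁻¹' {y}) = #X)
    (C : Set X) (s : I → X) (σ : I → I)
    (hs : Function.Injective s) (hσ : Function.Injective σ)
    (h1 : ∀ i, s i ∈ C) (h2 : ∀ i, f (s i) = s (σ i))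
    (h4 : ∀ z, f z ∈ C → z ∈ C) (h5 : ∀ z ∈ C, f z ∈ C)
    (h6 : ∀ z ∈ C, ∃ (n : ℕ) (i : I), f^[n] z = s i) :
    ∃ e : (I × List X) ≃ C, ∀ q, f (e q : X) = (e (mstep σ q) : X) := by
  have hgen : ∀ y : C, #(f ⁻¹' {(y:X)} \ Set.range s : Set X) = #X := by
    intro y
    refine mk_diff_eq _ _ (hgenX y) ?_
    rintro z ⟨hz1, i, rfl⟩ w ⟨hw1, j, rfl⟩
    simp only [Set.mem_preimage, Set.mem_singleton_iff] at hz1 hw1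
    rw [h2] at hz1 hw1
    rw [hσ (hs (hz1.trans hw1.symm))]
  let Feq : ∀ y : C, X ≃ (f ⁻¹' {(y:X)} \ Set.range s : Set X) := fun y =>
    ((Cardinal.eq.mp (hgen y)).some).symm
  let F : C → X → C := fun y a => ⟨(Feq y a : X), h4 _ (by
      have hf : f ((Feq y a : X)) = (y : X) := (Feq y a).2.1
      rw [hf]; exact y.2)⟩
  have pf1 : ∀ (y : C) a, f ((F y a : X)) = (y : X) := fun y a => (Feq y a).2.1
  have pf2 : ∀ (y : C) a, (F y a : X) ∉ Set.range s := fun y a => (Feq y a).2.2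
  have pf3 : ∀ (y : C) a a', (F y a : X) = (F y a' : X) → a = a' := fun y a a' h =>
    (Feq y).injective (Subtype.ext h)
  have pf4 : ∀ (y : C) z, f z = (y : X) → z ∉ Set.range s → ∃ a, (F y a : X) = z := by
    intro y z hfz hns
    refine ⟨(Feq y).symm ⟨z, ⟨hfz, hns⟩⟩, ?_⟩
    show ((Feq y) ((Feq y).symm ⟨z, _⟩) : X) = z
    rw [Equiv.apply_symm_apply]
  let E : List X → I → C := buildE (fun i => ⟨s i, h1 i⟩) F
  have e_range : ∀ a (l : List X) i, (E (a :: l) i : X) ∉ Set.range s := fun _ l i => pf2 _ _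
  have e_f : ∀ a (l : List X) i, f (E (a :: l) i : X) = (E l i : X) := fun _ l i => pf1 _ _
  have inj : ∀ (l l' : List X) (i i' : I), E l i = E l' i' → l = l' ∧ i = i' := by
    intro l
    induction l with
    | nil =>
      intro l' i i' h
      cases l' with
      | nil => exact ⟨rfl, hs (congrArg Subtype.val h)⟩
      | cons a l' => exact absurd ⟨i, congrArg Subtype.val h⟩ (e_range a l' i')
    | cons a l ih =>
      intro l' i i' h
      cases l' with
      | nil => exact absurd ⟨i', (congrArg Subtype.val h).symm⟩ (e_range a l i)
      | cons a' l' =>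
        have hv : f (E (a::l) i : X) = f (E (a'::l') i' : X) := by
          rw [congrArg Subtype.val h]
        rw [e_f, e_f] at hv
        obtain ⟨hl, hi⟩ := ih l' i i' (Subtype.ext hv)
        subst hl; subst hi
        have hval : (F (E l i) a : X) = (F (E l i) a' : X) := congrArg Subtype.val h
        rw [pf3 _ _ _ hval]
        exact ⟨rfl, rfl⟩
  have surj : ∀ z ∈ C, ∃ l i, (E l i : X) = z := by
    have main : ∀ (n : ℕ) (z : X), z ∈ C → (∃ i, f^[n] z = s i) →
        ∃ l i, (E l i : X) = z := by
      intro n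
      induction n with
      | zero =>
        rintro z _ ⟨i, hi⟩
        exact ⟨[], i, by rw [Function.iterate_zero_apply] at hi; exact hi.symm⟩
      | succ n ih =>
        rintro z hz ⟨i, hi⟩
        by_cases hr : z ∈ Set.range s
        · obtain ⟨j, hj⟩ := hr; exact ⟨[], j, hj⟩
        · have hfz : f z ∈ C := h5 z hz
          have hit : f^[n] (f z) = s i := by
            rw [← Function.iterate_succ_apply]; exact hi
          obtain ⟨l, j, hl⟩ := ih (f z) hfz ⟨i, hit⟩
          obtain ⟨a, ha⟩ := pf4 (E l j) z (by rw [hl]) hr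
          exact ⟨a :: l, j, ha⟩
    intro z hz
    obtain ⟨n, i, hi⟩ := h6 z hz
    exact main n z hz ⟨i, hi⟩
  refine ⟨Equiv.ofBijective (fun q : I × List X => E q.2 q.1) ⟨?_, ?_⟩, ?_⟩
  · rintro ⟨i, l⟩ ⟨i', l'⟩ h
    obtain ⟨hl, hi⟩ := inj l l' i i' h
    rw [hl, hi]
  · rintro ⟨z, hz⟩
    obtain ⟨l, i, hi⟩ := surj z hz
    exact ⟨(i, l), Subtype.ext hi⟩
  · rintro ⟨i, l⟩
    cases l with
    | nil => exact h2 i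
    | cons a l => exact e_f a l i

abbrev Skel : ℕ → Type
  | 0 => ℤ
  | (p+1) => ZMod (p+1)

abbrev shiftS : ∀ p : ℕ, Skel p → Skel p
  | 0 => fun n => (n + 1 : ℤ)
  | (p+1) => fun j => (j + 1 : ZMod (p+1))

lemma shiftS_inj (p : ℕ) : Function.Injective (shiftS p) := by
  cases p with
  | zero => exact fun a b h => by simpa [shiftS] using h
  | succ k => exact fun a b h => by simpa [shiftS] using h

noncomputable def back {X : Type*} (f : X → X) (hsurj : Function.Surjective f) (x : X) :
    ℕ → X
  | 0 => x
  | n+1 => (hsurj (back f hsurj x n)).choose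

lemma back_spec {X : Type*} (f : X → X) (hsurj : Function.Surjective f) (x : X) (n : ℕ) :
    f (back f hsurj x (n+1)) = back f hsurj x n :=
  (hsurj (back f hsurj x n)).choose_spec

lemma snail_equiv {X : Type*} [Infinite X] (f : X → X) (hsurj : Function.Surjective f)
    (hgen : ∀ y, #(f ⁻¹' {y}) = #X) {p : ℕ} {x : X} (hx : CycleType f x p) :
    ∃ e : (Skel p × List X) ≃ {y | Conn f x y},
      ∀ q, f (e q : X) = (e (mstep (shiftS p) q) : X) := by
  set C := {y | Conn f x y} with hC
  have h4 : ∀ z, f z ∈ C → z ∈ C := fun z hz =>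
    conn_trans f hz (conn_symm f (conn_f f z))
  have h5 : ∀ z ∈ C, f z ∈ C := fun z hz => conn_trans f hz (conn_f f z)
  have horb : ∀ z ∈ C, CycleType f z p := fun z hz => cycleType_conn f hz hx
  cases p with
  | zero =>
    have hinj : ∀ z ∈ C, Function.Injective fun n : ℕ => f^[n] z := by
      intro z hz
      rcases horb z hz with ⟨_, h⟩ | ⟨h1, _, _⟩
      · exact h
      · omega
    -- spine
    set s : ℤ → X := fun n => if 0 ≤ n then f^[n.toNat] x else back f hsurj x (-n).toNat
      with hs_def
    have s_nat : ∀ b : ℕ, s (b : ℤ) = f^[b] x := by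
      intro b
      simp [hs_def]
    have h2 : ∀ n : ℤ, f (s n) = s (n + 1) := by
      intro n
      rcases lt_trichotomy n (-1) with h | h | h
      · have hn : ¬ (0 ≤ n) := by omega
        have hn1 : ¬ (0 ≤ n + 1) := by omega
        rw [hs_def]
        simp only [hn, hn1, if_false]
        have : (-n).toNat = (-(n+1)).toNat + 1 := by omega
        rw [this]
        exact back_spec f hsurj x _
      · subst h
        show f (s (-1)) = s 0
        have : s (-1) = back f hsurj x 1 := by simp [hs_def]
        rw [this]
        have h0 : s 0 = x := by simp [hs_def]
        rw [h0]
        exact back_spec f hsurj x 0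
      · have hn : 0 ≤ n := by omega
        have hn1 : 0 ≤ n + 1 := by omega
        rw [hs_def]
        simp only [hn, hn1, if_true]
        rw [show (n+1).toNat = n.toNat + 1 by omega, Function.iterate_succ_apply']
    have s_conn : ∀ n : ℤ, s n ∈ C := by
      intro n
      by_cases hn : 0 ≤ n
      · rw [hs_def]; simp only [hn, if_true]; exact conn_iterate f x _
      · rw [hs_def]; simp only [hn, if_false]
        generalize (-n).toNat = k
        induction k with
        | zero => exact conn_refl f x
        | succ k ih =>
          exact conn_trans f ih (conn_symm f (by
            have := back_spec f hsurj x k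
            exact this ▸ conn_f f (back f hsurj x (k+1))))
    have s_iter : ∀ (k : ℕ) (n : ℤ), f^[k] (s n) = s (n + k) := by
      intro k
      induction k with
      | zero => intro n; simp
      | succ k ih =>
        intro n
        rw [Function.iterate_succ_apply, h2, ih]
        congr 1
        omega
    have hs : Function.Injective s := by
      have key : ∀ m n : ℤ, m ≤ n → s m = s n → m = n := by
        intro m n hmn h
        have ht : ((n - m).toNat : ℤ) = n - m := by omega
        have : f^[(n - m).toNat] (s m) = s n := by rw [s_iter]; congr 1; omega
        have h0 : f^[(n-m).toNat] (s m) = f^[0] (s m) := by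
          rw [this, Function.iterate_zero_apply, h]
        have := hinj (s m) (s_conn m) h0
        omega
      intro m n h
      rcases le_total m n with hle | hle
      · exact key m n hle h
      · exact (key n m hle h.symm).symm
    have h6 : ∀ z ∈ C, ∃ (n : ℕ) (i : ℤ), f^[n] z = s i := by
      intro z hz
      obtain ⟨b, a, hab⟩ := (conn_iff f).mp (conn_symm f hz)
      exact ⟨b, (a : ℤ), by rw [s_nat]; exact hab⟩
    exact component_equiv f hgen C s (shiftS 0) hs (shiftS_inj 0) s_conn h2 h4 h5 h6
  | succ k =>
    set P := k + 1 with hP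
    obtain ⟨n₀, hn₀⟩ : ∃ n : ℕ, f^[n] x = f^[n + P] x := by
      rcases hx with ⟨h0, _⟩ | ⟨_, h, _⟩
      · omega
      · exact h
    have hmin : ∀ q : ℕ, 1 ≤ q → q < P → ¬∃ n : ℕ, f^[n] x = f^[n + q] x := by
      rcases hx with ⟨h0, _⟩ | ⟨_, _, h⟩
      · omega
      · exact h
    have per : ∀ t : ℕ, f^[n₀ + t + P] x = f^[n₀ + t] x := by
      intro t
      have := congrArg (f^[t]) hn₀
      rw [← Function.iterate_add_apply, ← Function.iterate_add_apply] at this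
      calc f^[n₀ + t + P] x = f^[t + (n₀ + P)] x := by ring_nf
      _ = f^[t + n₀] x := this.symm
      _ = f^[n₀ + t] x := by rw [Nat.add_comm]
    have hmod : ∀ t : ℕ, f^[n₀ + t] x = f^[n₀ + t % P] x := by
      intro t
      induction t using Nat.strong_induction_on with
      | _ t ih =>
        by_cases ht : t < P
        · rw [Nat.mod_eq_of_lt ht]
        · have h2' : t % P = (t - P) % P := Nat.mod_eq_sub_mod (by omega)
          calc f^[n₀ + t] x = f^[n₀ + (t - P) + P] x := by congr 1; omega
          _ = f^[n₀ + (t - P)] x := per _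
          _ = f^[n₀ + (t - P) % P] x := ih _ (by omega)
          _ = f^[n₀ + t % P] x := by rw [h2']
    set c : ZMod P → X := fun j => f^[n₀ + j.val] x with hc_def
    have hcinj : Function.Injective c := by
      have key : ∀ a b : ℕ, a < P → b < P → a ≤ b → f^[n₀ + a] x = f^[n₀ + b] x → a = b := by
        intro a b ha hb hab h
        by_contra hne
        refine hmin (b - a) (by omega) (by omega) ⟨n₀ + a, ?_⟩
        rw [show n₀ + a + (b - a) = n₀ + b by omega]
        exact h
      intro j j' h
      apply ZMod.val_injective
      rcases le_total j.val j'.val with hle | hle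
      · exact key _ _ (ZMod.val_lt j) (ZMod.val_lt j') hle h
      · exact (key _ _ (ZMod.val_lt j') (ZMod.val_lt j) hle h.symm).symm
    have h2 : ∀ j : ZMod P, f (c j) = c (j + 1) := by
      intro j
      have hval : (j + 1).val = (j.val + 1) % P := by
        rw [ZMod.val_add, ZMod.val_one_eq_one_mod]
        conv_rhs => rw [Nat.add_mod, Nat.mod_eq_of_lt (ZMod.val_lt j)]
      have hcv : ∀ j : ZMod P, c j = f^[n₀ + j.val] x := fun _ => rfl
      rw [hcv, hcv]
      calc f (f^[n₀ + j.val] x) = f^[n₀ + j.val + 1] x :=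
        (Function.iterate_succ_apply' f (n₀ + j.val) x).symm
      _ = f^[n₀ + (j.val + 1)] x := by ring_nf
      _ = f^[n₀ + (j.val + 1) % P] x := hmod _
      _ = f^[n₀ + (j + 1).val] x := by rw [hval]
    have h1 : ∀ j, c j ∈ C := fun j => conn_iterate f x _
    have h6 : ∀ z ∈ C, ∃ (n : ℕ) (i : ZMod P), f^[n] z = c i := by
      intro z hz
      obtain ⟨a, b, hab⟩ := (conn_iff f).mp (conn_symm f hz)
      refine ⟨n₀ + a, (b : ZMod P), ?_⟩
      have hcv : ∀ j : ZMod P, c j = f^[n₀ + j.val] x := fun _ => rfl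
      rw [Function.iterate_add_apply, hab, ← Function.iterate_add_apply, hcv,
        ZMod.val_natCast, ← hmod]
    exact component_equiv f hgen C c (shiftS (k+1)) hcinj (shiftS_inj (k+1)) h1 h2 h4 h5 h6

lemma snails_disjoint {X : Type*} (h : X → X) {p p' : ℕ} {C C' : Set X}
    (hC : C ∈ Snails h p) (hC' : C' ∈ Snails h p') {z : X} (hz : z ∈ C) (hz' : z ∈ C') :
    p = p' ∧ C = C' := by
  obtain ⟨x, rfl, hx⟩ := hC
  obtain ⟨x', rfl, hx'⟩ := hC'
  have hxx' : Conn h x x' := conn_trans h hz (conn_symm h hz')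
  exact ⟨cycleType_unique h (cycleType_conn h hxx' hx) hx', conn_class_eq h hxx'⟩

lemma model_equiv {X : Type*} [Infinite X] (h : X → X) (hsurj : Function.Surjective h)
    (hgen : ∀ y, #(h ⁻¹' {y}) = #X) :
    ∃ Φ : (Σ p : ℕ, ↥(Snails h p) × (Skel p × List X)) ≃ X,
      ∀ m, h (Φ m) = Φ ⟨m.1, (m.2.1, mstep (shiftS m.1) m.2.2)⟩ := by
  have EE : ∀ (p : ℕ) (C : ↥(Snails h p)), ∃ e : (Skel p × List X) ≃ ((C : Set X)),
      ∀ q, h (e q : X) = (e (mstep (shiftS p) q) : X) := by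
    intro p C
    obtain ⟨x, hCx, hx⟩ := C.2
    obtain ⟨e, he⟩ := snail_equiv h hsurj hgen hx
    refine ⟨e.trans (Equiv.setCongr hCx.symm), fun q => ?_⟩
    exact he q
  choose E hE using EE
  have hmem : ∀ (p : ℕ) (C : ↥(Snails h p)) q, ((E p C q : X)) ∈ (C : Set X) :=
    fun p C q => (E p C q).2
  refine ⟨Equiv.ofBijective (fun m : (Σ p : ℕ, ↥(Snails h p) × (Skel p × List X)) =>
    (E m.1 m.2.1 m.2.2 : X)) ⟨?_, ?_⟩, fun m => hE m.1 m.2.1 m.2.2⟩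
  · rintro ⟨p, C, q⟩ ⟨p', C', q'⟩ hEq
    simp only at hEq
    obtain ⟨hpp, hCC⟩ := snails_disjoint h C.2 C'.2 (hmem p C q) (hEq ▸ hmem p' C' q')
    subst hpp
    have : C = C' := Subtype.ext hCC
    subst this
    have : q = q' := (E p C).injective (Subtype.ext hEq)
    rw [this]
  · intro z
    obtain ⟨p, hp⟩ := cycleType_exists h z
    have hCmem : {y | Conn h z y} ∈ Snails h p := ⟨z, rfl, hp⟩
    have hzC : z ∈ {y | Conn h z y} := conn_refl h z
    refine ⟨⟨p, ⟨{y | Conn h z y}, hCmem⟩, (E p ⟨_, hCmem⟩).symm ⟨z, hzC⟩⟩, ?_⟩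
    show ((E p ⟨_, hCmem⟩) ((E p ⟨_, hCmem⟩).symm ⟨z, hzC⟩) : X) = z
    rw [Equiv.apply_symm_apply]


theorem stmt_9 {X : Type*} [Infinite X] (f g : X → X)
    (hfsurj : Function.Surjective f) (hgsurj : Function.Surjective g)
    (hfgen : ∀ y : X, #(f ⁻¹' {y}) = #X) (hggen : ∀ y : X, #(g ⁻¹' {y}) = #X)
    (hsnails : ∀ p : ℕ, #(Snails f p) = #(Snails g p)) :
    ∃ γ : Equiv.Perm X, f = ⇑γ.symm ∘ g ∘ ⇑γ := by
  obtain ⟨Φf, hΦf⟩ := model_equiv f hfsurj hfgen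
  obtain ⟨Φg, hΦg⟩ := model_equiv g hgsurj hggen
  have B : ∀ p : ℕ, ↥(Snails f p) ≃ ↥(Snails g p) := fun p =>
    (Cardinal.eq.mp (hsnails p)).some
  let T := Equiv.sigmaCongrRight (fun p => (B p).prodCongr (Equiv.refl (Skel p × List X)))
  have main : ∀ x, (Φf.symm.trans (T.trans Φg)) (f x) = g ((Φf.symm.trans (T.trans Φg)) x) := by
    intro x
    rcases hm' : Φf.symm x with ⟨p, C, q⟩
    have hx : x = Φf ⟨p, (C, q)⟩ := by rw [← hm', Equiv.apply_symm_apply]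
    have h1 : f x = Φf ⟨p, (C, mstep (shiftS p) q)⟩ := by rw [hx]; exact hΦf ⟨p, (C, q)⟩
    simp only [Equiv.trans_apply]
    rw [h1, Equiv.symm_apply_apply, hm']
    show Φg ⟨p, (B p C, mstep (shiftS p) q)⟩ = g (Φg ⟨p, (B p C, q)⟩)
    exact (hΦg ⟨p, (B p C, q)⟩).symm
  refine ⟨Φf.symm.trans (T.trans Φg), ?_⟩
  funext x
  show f x = (Φf.symm.trans (T.trans Φg)).symm (g ((Φf.symm.trans (T.trans Φg)) x))
  rw [← main x, Equiv.symm_apply_apply]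
end

section
/- Let X be an infinite set of cardinality κ. For every sequence (a_p)_{p ∈ ℕ} of cardinals ≤ κ which is not identically zero, there exists a surjective generous function f : X → X whose number of p-snails is exactly a_p for every p ∈ ℕ. In particular, rich functions (surjective generous functions with κ many p-snails for every p ≥ 0) exist on X. -/
open Cardinal

namespace Stmt11Aux

/-! ### Generic transport lemmas -/

variable {A B : Type*}

lemma iterate_semiconj {s : A → A} {g : B → B} {h : A → B}
    (hsc : ∀ z, g (h z) = h (s z)) (n : ℕ) (z : A) : g^[n] (h z) = h (s^[n] z) := by
  induction n generalizing z with
  | zero => rfl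
  | succ n ih =>
    rw [Function.iterate_succ_apply, Function.iterate_succ_apply, hsc, ih]

lemma cycleType_comp {s : A → A} {g : B → B} {h : A → B}
    (hinj : Function.Injective h) (hsc : ∀ z, g (h z) = h (s z)) (z : A) (q : ℕ) :
    CycleType g (h z) q ↔ CycleType s z q := by
  have hit : ∀ n, g^[n] (h z) = h (s^[n] z) := fun n => iterate_semiconj hsc n z
  constructor
  · rintro (⟨hq, hi⟩ | ⟨hq, ⟨n, hn⟩, hmin⟩)
    · refine Or.inl ⟨hq, fun m n hmn => hi ?_⟩
      have hmn2 : s^[m] z = s^[n] z := hmn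
      show g^[m] (h z) = g^[n] (h z)
      rw [hit, hit, hmn2]
    · refine Or.inr ⟨hq, ⟨n, hinj ?_⟩, fun q' h1 h2 hex => hmin q' h1 h2 ?_⟩
      · rw [← hit, ← hit, hn]
      · obtain ⟨m, hm⟩ := hex
        exact ⟨m, by rw [hit, hit, hm]⟩
  · rintro (⟨hq, hi⟩ | ⟨hq, ⟨n, hn⟩, hmin⟩)
    · refine Or.inl ⟨hq, fun m n hmn => hi ?_⟩
      have hmn2 : g^[m] (h z) = g^[n] (h z) := hmn
      rw [hit, hit] at hmn2
      exact hinj hmn2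
    · refine Or.inr ⟨hq, ⟨n, ?_⟩, fun q' h1 h2 hex => hmin q' h1 h2 ?_⟩
      · rw [hit, hit, hn]
      · obtain ⟨m, hm⟩ := hex
        rw [hit, hit] at hm
        exact ⟨m, hinj hm⟩

lemma conn_equiv (e : A ≃ B) (g : A → A) (x y : A) :
    Conn (⇑e ∘ g ∘ ⇑e.symm) (e x) (e y) ↔ Conn g x y := by
  constructor
  · intro h
    have key : ∀ u v : B, Conn (⇑e ∘ g ∘ ⇑e.symm) u v → Conn g (e.symm u) (e.symm v) := by
      intro u v h
      induction h with
      | rel a b hab =>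
        refine Relation.EqvGen.rel _ _ ?_
        have := congrArg e.symm hab
        simpa using this
      | refl a => exact Relation.EqvGen.refl _
      | symm a b _ ih => exact Relation.EqvGen.symm _ _ ih
      | trans a b c _ _ ih1 ih2 => exact Relation.EqvGen.trans _ _ _ ih1 ih2
    simpa using key _ _ h
  · intro h
    induction h with
    | rel a b hab => exact Relation.EqvGen.rel _ _ (by simp [hab])
    | refl a => exact Relation.EqvGen.refl _
    | symm a b _ ih => exact Relation.EqvGen.symm _ _ ih
    | trans a b c _ _ ih1 ih2 => exact Relation.EqvGen.trans _ _ _ ih1 ih2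

lemma conn_iterate (g : A → A) (x : A) (n : ℕ) : Conn g x (g^[n] x) := by
  induction n with
  | zero => exact Relation.EqvGen.refl x
  | succ n ih =>
    exact Relation.EqvGen.trans _ _ _ ih
      (Relation.EqvGen.rel _ _ (Function.iterate_succ_apply' g n x).symm)

lemma conn_of_common (g : A → A) (x y : A) (h : ∃ n m, g^[n] x = g^[m] y) :
    Conn g x y := by
  obtain ⟨n, m, hnm⟩ := h
  refine Relation.EqvGen.trans _ _ _ (conn_iterate g x n) ?_
  rw [hnm]
  exact Relation.EqvGen.symm _ _ (conn_iterate g y m)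

end Stmt11Aux
namespace Stmt11Aux

variable {K : Type*}

/-- Local step map of a snail with cycle length `p` (line for `p = 0`). -/
def sstep (K : Type*) (p : ℕ) : ℤ × List K → ℤ × List K
  | (i, []) => (if p = 0 then i + 1 else (i + 1) % (p : ℤ), [])
  | (i, _ :: t) => (i, t)

@[simp] lemma sstep_cons (p : ℕ) (i : ℤ) (k : K) (t : List K) :
    sstep K p (i, k :: t) = (i, t) := rfl

lemma sstep_nil (p : ℕ) (i : ℤ) :
    sstep K p (i, ([] : List K)) = (if p = 0 then i + 1 else (i + 1) % (p : ℤ), []) := rfl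

lemma sstep_nil0 (i : ℤ) : sstep K 0 (i, ([] : List K)) = (i + 1, []) := rfl

lemma sstep_nil_pos {p : ℕ} (hp : p ≠ 0) (i : ℤ) :
    sstep K p (i, ([] : List K)) = ((i + 1) % (p : ℤ), []) := by
  rw [sstep_nil, if_neg hp]

lemma iter_drop (p : ℕ) (i : ℤ) (l : List K) :
    (sstep K p)^[l.length] (i, l) = (i, []) := by
  induction l with
  | nil => rfl
  | cons k t ih =>
    show (sstep K p)^[t.length + 1] (i, k :: t) = (i, [])
    rw [Function.iterate_succ_apply, sstep_cons, ih]

lemma iter0_nil (i : ℤ) (n : ℕ) :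
    (sstep K 0)^[n] ((i, []) : ℤ × List K) = (i + n, []) := by
  induction n generalizing i with
  | zero => simp
  | succ n ih =>
    rw [Function.iterate_succ_apply, sstep_nil0, ih]
    congr 1
    push_cast
    ring

lemma psi_sstep0 (z : ℤ × List K) :
    (sstep K 0 z).1 - ((sstep K 0 z).2.length : ℤ) = z.1 - (z.2.length : ℤ) + 1 := by
  obtain ⟨i, _ | ⟨k, t⟩⟩ := z
  · simp [sstep_nil0]
  · rw [sstep_cons]
    simp only [List.length_cons]
    push_cast
    ring

lemma psi_iter0 (n : ℕ) (z : ℤ × List K) :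
    ((sstep K 0)^[n] z).1 - (((sstep K 0)^[n] z).2.length : ℤ) = z.1 - (z.2.length : ℤ) + n := by
  induction n with
  | zero => simp
  | succ n ih =>
    rw [Function.iterate_succ_apply', psi_sstep0, ih]
    push_cast
    ring

lemma inj0 (z : ℤ × List K) : Function.Injective fun n : ℕ => (sstep K 0)^[n] z := by
  intro m n h
  have hmn : (sstep K 0)^[m] z = (sstep K 0)^[n] z := h
  have h1 := psi_iter0 m z
  have h2 := psi_iter0 n z
  rw [hmn] at h1
  omega

lemma emod_add_one (c p : ℤ) : (c % p + 1) % p = (c + 1) % p := by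
  rw [Int.add_emod c 1, Int.add_emod (c % p) 1, Int.emod_emod_of_dvd _ dvd_rfl]

lemma iterP {p : ℕ} (hp : p ≠ 0) : ∀ (n : ℕ) (c : ℤ),
    (sstep K p)^[n] ((c % (p : ℤ), []) : ℤ × List K) = ((c + n) % (p : ℤ), []) := by
  intro n
  induction n with
  | zero => intro c; simp
  | succ n ih =>
    intro c
    rw [Function.iterate_succ_apply, sstep_nil_pos hp, emod_add_one, ih (c + 1)]
    congr 1
    push_cast
    ring

lemma iter_general_pos {p : ℕ} (hp : p ≠ 0) (i : ℤ) (l : List K) (k : ℕ) :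
    (sstep K p)^[l.length + 1 + k] (i, l) = ((i + 1 + k) % (p : ℤ), []) := by
  have h1 : l.length + 1 + k = k + (1 + l.length) := by omega
  rw [h1, Function.iterate_add_apply, Function.iterate_add_apply, iter_drop,
    Function.iterate_one, sstep_nil_pos hp]
  have := iterP (K := K) hp k (i + 1)
  rw [show (i + 1) % (p : ℤ) = (i + 1) % (p : ℤ) from rfl]
  exact this

lemma per_pos {p : ℕ} (hp : p ≠ 0) (z : ℤ × List K) :
    ∃ n, (sstep K p)^[n] z = (sstep K p)^[n + p] z := by
  obtain ⟨i, l⟩ := z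
  refine ⟨l.length + 1, ?_⟩
  have h0 := iter_general_pos (K := K) hp i l 0
  have h1 := iter_general_pos (K := K) hp i l p
  rw [show l.length + 1 + p = l.length + 1 + p from rfl] at h1
  have e0 : l.length + 1 + 0 = l.length + 1 := by omega
  rw [e0] at h0
  rw [h0, h1]
  have hmod : (i + 1 + (p : ℤ)) % (p : ℤ) = (i + 1) % (p : ℤ) := by
    simpa using Int.add_mul_emod_self_left (i + 1) (p : ℤ) 1
  simp [hmod]

lemma nosmall_pos {p : ℕ} (hp : p ≠ 0) (q : ℕ) (hq1 : 1 ≤ q) (hqp : q < p)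
    (z : ℤ × List K) : ¬∃ n, (sstep K p)^[n] z = (sstep K p)^[n + q] z := by
  rintro ⟨n, hn⟩
  obtain ⟨i, l⟩ := z
  have hprop : ∀ m : ℕ, (sstep K p)^[m + n] (i, l) = (sstep K p)^[m + n + q] (i, l) := by
    intro m
    rw [Function.iterate_add_apply, hn, ← Function.iterate_add_apply]
    congr 1
    omega
  have h3 := hprop (l.length + 1)
  have h1 := iter_general_pos (K := K) hp i l n
  have h2 := iter_general_pos (K := K) hp i l (n + q)
  rw [show l.length + 1 + n = l.length + 1 + n from rfl] at h3
  have e1 : l.length + 1 + n + q = l.length + 1 + (n + q) := by omega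
  rw [e1, h2] at h3
  rw [show (sstep K p)^[l.length + 1 + n] (i, l) = ((i + 1 + n) % (p : ℤ), []) from h1] at h3
  have hfst : (i + 1 + (n : ℤ)) % (p : ℤ) = (i + 1 + (((n + q : ℕ)) : ℤ)) % (p : ℤ) :=
    congrArg Prod.fst h3
  have hm : (i + 1 + (n : ℤ)) ≡ (i + 1 + (((n + q : ℕ)) : ℤ)) [ZMOD (p : ℤ)] := hfst
  have hdvd : (p : ℤ) ∣ (q : ℤ) := by
    have h5 := hm.dvd
    have h6 : (i + 1 + (((n + q : ℕ)) : ℤ)) - (i + 1 + (n : ℤ)) = (q : ℤ) := by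
      push_cast
      ring
    rwa [h6] at h5
  have hq0 : (0 : ℤ) < (q : ℤ) := by exact_mod_cast hq1
  have := Int.le_of_dvd hq0 hdvd
  omega

lemma cycleType_sstep (p q : ℕ) (z : ℤ × List K) :
    CycleType (sstep K p) z q ↔ q = p := by
  constructor
  · rintro (⟨hq0, hinj⟩ | ⟨hq1, hper, hmin⟩)
    · subst hq0
      by_contra hp0
      have hp : p ≠ 0 := fun h => hp0 h.symm
      obtain ⟨n, hn⟩ := per_pos (K := K) hp z
      have := hinj hn
      omega
    · rcases lt_trichotomy q p with h | h | h
      · exact absurd hper (nosmall_pos (fun h' => by omega) q hq1 h z)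
      · exact h
      · by_cases hp : p = 0
        · subst hp
          obtain ⟨n, hn⟩ := hper
          have := inj0 (K := K) z hn
          omega
        · exact absurd (per_pos hp z) (hmin p (by omega) h)
  · rintro rfl
    by_cases hp : q = 0
    · subst hp
      exact Or.inl ⟨rfl, inj0 z⟩
    · exact Or.inr ⟨by omega, per_pos hp z, fun q' h1 h2 => nosmall_pos hp q' h1 h2 z⟩

lemma reach_zero_pos {p : ℕ} (hp : p ≠ 0) (z : ℤ × List K) :
    ∃ n, (sstep K p)^[n] z = (0, []) := by
  obtain ⟨i, l⟩ := z
  have hppos : (0 : ℤ) < (p : ℤ) := by exact_mod_cast Nat.pos_of_ne_zero hp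
  have hpne : ((p : ℤ)) ≠ 0 := by omega
  have h1 : 0 ≤ (i + 1) % (p : ℤ) := Int.emod_nonneg _ hpne
  have h2 : (i + 1) % (p : ℤ) < (p : ℤ) := Int.emod_lt_of_pos _ hppos
  refine ⟨l.length + 1 + ((p : ℤ) - (i + 1) % (p : ℤ)).toNat, ?_⟩
  rw [iter_general_pos hp]
  have ht : ((((p : ℤ) - (i + 1) % (p : ℤ)).toNat : ℤ)) = (p : ℤ) - (i + 1) % (p : ℤ) :=
    Int.toNat_of_nonneg (by omega)
  have hd := Int.mul_ediv_add_emod (i + 1) (p : ℤ)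
  have key : i + 1 + ((p : ℤ) - (i + 1) % (p : ℤ)) = (p : ℤ) * ((i + 1) / (p : ℤ) + 1) := by
    rw [mul_add, mul_one]
    linarith
  have : (i + 1 + ((((p : ℤ) - (i + 1) % (p : ℤ)).toNat : ℤ))) % (p : ℤ) = 0 := by
    rw [ht, key]
    exact Int.mul_emod_right _ _
  simp only [Prod.mk.injEq]
  exact ⟨this, trivial⟩

lemma common0 (z z' : ℤ × List K) :
    ∃ n m, (sstep K 0)^[n] z = (sstep K 0)^[m] z' := by
  obtain ⟨i, l⟩ := z
  obtain ⟨i', l'⟩ := z'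
  have key : ∀ (j : ℤ) (t : List K) (k : ℕ),
      (sstep K 0)^[t.length + k] (j, t) = (j + k, []) := by
    intro j t k
    rw [add_comm, Function.iterate_add_apply, iter_drop, iter0_nil]
  refine ⟨l.length + ((max i i') - i).toNat, l'.length + ((max i i') - i').toNat, ?_⟩
  rw [key, key]
  have hi : i ≤ max i i' := le_max_left _ _
  have hi' : i' ≤ max i i' := le_max_right _ _
  simp only [Prod.mk.injEq]
  exact ⟨by omega, trivial⟩

end Stmt11Aux
namespace Stmt11Aux

universe u

/-- Model space: for each `p : ℕ`, `(a p).out` many snails of cycle-type `p`. -/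
def SnailT (a : ℕ → Cardinal.{u}) (X : Type u) : Type u :=
  (p : ℕ) × ((a p).out × (ℤ × List X))

/-- The model function on the model space. -/
def snailF (a : ℕ → Cardinal.{u}) (X : Type u) : SnailT a X → SnailT a X :=
  fun z => ⟨z.1, z.2.1, sstep X z.1 z.2.2⟩

/-- Index (snail identity) of a point of the model space. -/
def idxT (a : ℕ → Cardinal.{u}) (X : Type u) : SnailT a X → (p : ℕ) × (a p).out :=
  fun z => ⟨z.1, z.2.1⟩

variable {X : Type u} (a : ℕ → Cardinal.{u})

lemma mk3_inj (p : ℕ) (j : (a p).out) :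
    Function.Injective (fun w : ℤ × List X => (⟨p, j, w⟩ : SnailT a X)) := by
  intro w w' h
  simpa using h

lemma snailF_iter (n : ℕ) (p : ℕ) (j : (a p).out) (z : ℤ × List X) :
    (snailF a X)^[n] ⟨p, j, z⟩ = ⟨p, j, (sstep X p)^[n] z⟩ :=
  iterate_semiconj (s := sstep X p) (g := snailF a X)
    (h := fun w => (⟨p, j, w⟩ : SnailT a X)) (fun _ => rfl) n z

lemma cycleType_snailF (p : ℕ) (j : (a p).out) (z : ℤ × List X) (q : ℕ) :
    CycleType (snailF a X) ⟨p, j, z⟩ q ↔ q = p :=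
  (cycleType_comp (mk3_inj a p j) (fun _ => rfl) z q).trans (cycleType_sstep p q z)

lemma conn_idx (x y : SnailT a X) :
    Conn (snailF a X) x y ↔ idxT a X x = idxT a X y := by
  constructor
  · intro h
    induction h with
    | rel u v huv => rw [← huv]; rfl
    | refl u => rfl
    | symm u v _ ih => exact ih.symm
    | trans u v w _ _ ih1 ih2 => exact ih1.trans ih2
  · intro h
    obtain ⟨p, j, z⟩ := x
    obtain ⟨p', j', z'⟩ := y
    have hp : p = p' := congrArg Sigma.fst h
    subst hp
    have hj : j = j' := by simpa [idxT] using h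
    subst hj
    apply conn_of_common
    have hcom : ∃ n m, (sstep X p)^[n] z = (sstep X p)^[m] z' := by
      by_cases hp0 : p = 0
      · subst hp0; exact common0 z z'
      · obtain ⟨n, hn⟩ := reach_zero_pos (K := X) hp0 z
        obtain ⟨m, hm⟩ := reach_zero_pos (K := X) hp0 z'
        exact ⟨n, m, by rw [hn, hm]⟩
    obtain ⟨n, m, hnm⟩ := hcom
    exact ⟨n, m, by rw [snailF_iter, snailF_iter, hnm]⟩

lemma snails_snailF (p : ℕ) :
    Snails (snailF a X) p
      = Set.range (fun j : (a p).out => {y : SnailT a X | idxT a X y = ⟨p, j⟩}) := by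
  ext C
  simp only [Snails, Set.mem_setOf_eq, Set.mem_range]
  constructor
  · rintro ⟨⟨p', j, z⟩, rfl, hct⟩
    have hp : p = p' := (cycleType_snailF a p' j z p).mp hct
    subst hp
    refine ⟨j, ?_⟩
    ext y
    simp only [Set.mem_setOf_eq]
    exact eq_comm.trans (conn_idx a ⟨p, j, z⟩ y).symm
  · rintro ⟨j, rfl⟩
    refine ⟨⟨p, j, (0, [])⟩, ?_, (cycleType_snailF a p j (0, []) p).mpr rfl⟩
    ext y
    simp only [Set.mem_setOf_eq]
    exact eq_comm.trans (conn_idx a ⟨p, j, (0, [])⟩ y).symm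

lemma mk_snails_snailF (p : ℕ) : #(Snails (snailF a X) p) = a p := by
  rw [snails_snailF]
  have hinj : Function.Injective
      (fun j : (a p).out => {y : SnailT a X | idxT a X y = ⟨p, j⟩}) := by
    intro j j' h
    have h' : {y : SnailT a X | idxT a X y = ⟨p, j⟩}
        = {y : SnailT a X | idxT a X y = ⟨p, j'⟩} := h
    have hmem : (⟨p, j, (0, [])⟩ : SnailT a X) ∈ {y : SnailT a X | idxT a X y = ⟨p, j⟩} := rfl
    rw [h'] at hmem
    have hmem2 : (⟨p, j⟩ : (p : ℕ) × (a p).out) = ⟨p, j'⟩ := hmem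
    simpa using hmem2
  rw [Cardinal.mk_range_eq _ hinj, Cardinal.mk_out]

lemma mk_snailT [Infinite X] (ha : ∀ p : ℕ, a p ≤ #X) (hnz : ∃ p : ℕ, a p ≠ 0) :
    #(SnailT a X) = #X := by
  apply le_antisymm
  · have hbound : ∀ p : ℕ, #((a p).out × (ℤ × List X)) ≤ #X := by
      intro p
      have h1 : #((a p).out × (ℤ × List X)) = (a p) * #(ℤ × List X) := by
        simp [Cardinal.mk_prod]
      have h2 : #(ℤ × List X) = #X := by
        simp only [Cardinal.mk_prod, Cardinal.mk_int, Cardinal.lift_aleph0,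
          Cardinal.mk_list_eq_mk, Cardinal.lift_id, Cardinal.lift_uzero]
        rw [Cardinal.mul_eq_max le_rfl (Cardinal.aleph0_le_mk X)]
        exact sup_eq_right.mpr (Cardinal.aleph0_le_mk X)
      rw [h1, h2]
      calc a p * #X ≤ #X * #X := mul_le_mul_left (ha p) _
        _ = #X := Cardinal.mul_eq_self (Cardinal.aleph0_le_mk X)
    calc #(SnailT a X)
        = Cardinal.sum (fun p : ℕ => #((a p).out × (ℤ × List X))) := Cardinal.mk_sigma _
      _ ≤ Cardinal.sum (fun _ : ℕ => #X) := Cardinal.sum_le_sum _ _ hbound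
      _ = Cardinal.lift.{u} #ℕ * Cardinal.lift.{0} #X := Cardinal.sum_const ℕ #X
      _ = ℵ₀ * #X := by simp
      _ = #X := by
          rw [Cardinal.mul_eq_max le_rfl (Cardinal.aleph0_le_mk X)]
          exact sup_eq_right.mpr (Cardinal.aleph0_le_mk X)
  · obtain ⟨p₀, hp₀⟩ := hnz
    have hne : Nonempty (a p₀).out :=
      Cardinal.mk_ne_zero_iff.mp (by rw [Cardinal.mk_out]; exact hp₀)
    obtain ⟨j₀⟩ := hne
    apply Cardinal.mk_le_of_injective (f := fun k : X => (⟨p₀, j₀, (0, [k])⟩ : SnailT a X))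
    intro k k' h
    simpa using h

/-! ### Transport along an equivalence -/

variable {A B : Type*}

lemma cycleType_equivMap (e : A ≃ B) (g : A → A) (z : A) (q : ℕ) :
    CycleType (⇑e ∘ g ∘ ⇑e.symm) (e z) q ↔ CycleType g z q :=
  cycleType_comp e.injective (fun w => by simp) z q

lemma conn_set_equiv (e : A ≃ B) (g : A → A) (z : A) :
    {y | Conn (⇑e ∘ g ∘ ⇑e.symm) (e z) y} = ⇑e '' {w | Conn g z w} := by
  ext y
  rw [Equiv.image_eq_preimage_symm]
  simp only [Set.mem_setOf_eq, Set.mem_preimage]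
  constructor
  · intro h
    have h2 : Conn (⇑e ∘ g ∘ ⇑e.symm) (e z) (e (e.symm y)) := by simpa using h
    exact (conn_equiv e g z (e.symm y)).mp h2
  · intro h
    have h2 := (conn_equiv e g z (e.symm y)).mpr h
    simpa using h2

lemma snails_equiv (e : A ≃ B) (g : A → A) (p : ℕ) :
    Snails (⇑e ∘ g ∘ ⇑e.symm) p = Set.image ⇑e '' Snails g p := by
  ext C
  simp only [Snails, Set.mem_setOf_eq, Set.mem_image]
  constructor
  · rintro ⟨x, rfl, hct⟩
    refine ⟨{w | Conn g (e.symm x) w}, ⟨e.symm x, rfl, ?_⟩, ?_⟩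
    · have h2 : CycleType (⇑e ∘ g ∘ ⇑e.symm) (e (e.symm x)) p := by simpa using hct
      exact (cycleType_equivMap e g (e.symm x) p).mp h2
    · rw [← conn_set_equiv, Equiv.apply_symm_apply]
  · rintro ⟨D, ⟨z, rfl, hct⟩, rfl⟩
    exact ⟨e z, (conn_set_equiv e g z).symm, (cycleType_equivMap e g z p).mpr hct⟩

end Stmt11Aux
open Stmt11Aux
theorem stmt_11 {X : Type*} [Infinite X] (a : ℕ → Cardinal)
    (ha : ∀ p : ℕ, a p ≤ #X) (hnz : ∃ p : ℕ, a p ≠ 0) :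
    ∃ f : X → X, Function.Surjective f ∧ (∀ y : X, #(f ⁻¹' {y}) = #X) ∧
      ∀ p : ℕ, #(Snails f p) = a p := by
  classical
  obtain ⟨e⟩ := Cardinal.eq.mp (mk_snailT a ha hnz)
  refine ⟨⇑e ∘ snailF a X ∘ ⇑e.symm, ?_, ?_, ?_⟩
  · have hs : Function.Surjective (snailF a X) := by
      rintro ⟨p, j, i, l⟩
      exact ⟨⟨p, j, i, (Classical.arbitrary X) :: l⟩, rfl⟩
    exact e.surjective.comp (hs.comp e.symm.surjective)
  · intro y
    have h1 : #((⇑e ∘ snailF a X ∘ ⇑e.symm) ⁻¹' {y}) = #(snailF a X ⁻¹' {e.symm y}) := by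
      apply Cardinal.mk_congr
      refine Equiv.subtypeEquiv e.symm (fun x => ?_)
      simp only [Set.mem_preimage, Set.mem_singleton_iff, Function.comp_apply]
      exact Equiv.apply_eq_iff_eq_symm_apply e
    rw [h1]
    apply le_antisymm
    · exact (Cardinal.mk_set_le _).trans (le_of_eq (mk_snailT a ha hnz))
    · suffices h : ∀ w : SnailT a X, #X ≤ #(snailF a X ⁻¹' {w}) from h (e.symm y)
      rintro ⟨p, j, i, l⟩
      apply Cardinal.mk_le_of_injective
        (f := fun k : X =>
          (⟨⟨p, j, i, k :: l⟩, rfl⟩ : (snailF a X ⁻¹' {⟨p, j, i, l⟩})))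
      intro k k' h
      have h2 : (⟨p, j, i, k :: l⟩ : SnailT a X).2.2.2 = (⟨p, j, i, k' :: l⟩ : SnailT a X).2.2.2 :=
        congrArg (fun t : SnailT a X => t.2.2.2) (congrArg Subtype.val h)
      simpa using h2
  · intro p
    rw [snails_equiv e (snailF a X) p,
      Cardinal.mk_image_eq (Set.image_injective.mpr e.injective)]
    exact mk_snails_snailF a p
end

section
/- Let X be an infinite set of cardinality κ, S ⊆ X co-large, and f : S² → X. Define g : X² → X by g(x₁,x₂) = f(x₁,x₂) if x₁,x₂ ∈ S; g(x₁,x₂) = γ(x₁) if x₁ ∉ S; g(x₁,x₂) = γ(x₂) if x₁ ∈ S and x₂ ∉ S, where γ : X → X maps X \ S onto X. Then for all unary functions g₁, g₂ each of which is either constant or almost surjective, the function x ↦ g(g₁(x), g₂(x)) is either constant or almost surjective. -/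
open Cardinal Set

/-- Every value missed by `h` is `γ` of a point of `Sᶜ` missed by `k`, since `γ` maps `Sᶜ` onto
`Y` and `h` hits `γ (k x)` whenever `k x ∉ S`. -/
lemma mk_compl_range_le_of_eq_comp_off {α : Type*} {X Y : Type u} {S : Set X} {γ : X → Y}
    (hγ : γ '' Sᶜ = Set.univ) {k : α → X} {h : α → Y} (hh : ∀ x, k x ∉ S → h x = γ (k x)) :
    #((range h)ᶜ : Set Y) ≤ #((range k)ᶜ : Set X) := by
  have hsub : (range h)ᶜ ⊆ γ '' (range k)ᶜ := by
    intro y hy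
    obtain ⟨z, hzS, rfl⟩ : y ∈ γ '' Sᶜ := hγ ▸ Set.mem_univ y
    refine ⟨z, ?_, rfl⟩
    rintro ⟨x, rfl⟩
    exact hy ⟨x, hh x hzS⟩
  exact (mk_le_mk_of_subset hsub).trans mk_image_le

theorem stmt_14_general {X : Type*} (S : Set X)
    (γ : X → X) (hγ : γ '' Sᶜ = Set.univ)
    (g : X → X → X)
    (hg2 : ∀ x₁ x₂ : X, x₁ ∉ S → g x₁ x₂ = γ x₁)
    (hg3 : ∀ x₁ x₂ : X, x₁ ∈ S → x₂ ∉ S → g x₁ x₂ = γ x₂) :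
    ∀ g₁ g₂ : X → X,
      ((∃ c : X, ∀ x, g₁ x = c) ∨ #((Set.range g₁)ᶜ : Set X) < #X) →
      ((∃ c : X, ∀ x, g₂ x = c) ∨ #((Set.range g₂)ᶜ : Set X) < #X) →
      ((∃ c : X, ∀ x, g (g₁ x) (g₂ x) = c) ∨
        #((Set.range fun x => g (g₁ x) (g₂ x))ᶜ : Set X) < #X) := by
  intro g₁ g₂ h₁ h₂
  rcases h₁ with ⟨c₁, hc₁⟩ | hsmall₁
  · by_cases hc₁S : c₁ ∈ S
    · rcases h₂ with ⟨c₂, hc₂⟩ | hsmall₂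
      · exact Or.inl ⟨g c₁ c₂, fun x => by rw [hc₁, hc₂]⟩
      · refine Or.inr ((mk_compl_range_le_of_eq_comp_off hγ fun x hx => ?_).trans_lt hsmall₂)
        rw [hc₁, hg3 c₁ (g₂ x) hc₁S hx]
    · exact Or.inl ⟨γ c₁, fun x => by rw [hc₁, hg2 c₁ (g₂ x) hc₁S]⟩
  · exact Or.inr ((mk_compl_range_le_of_eq_comp_off hγ fun x hx =>
      hg2 (g₁ x) (g₂ x) hx).trans_lt hsmall₁)

theorem stmt_14 {X : Type*} [Infinite X] (S : Set X) (hS : #(Sᶜ : Set X) = #X)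
    (f : X → X → X) (γ : X → X) (hγ : γ '' Sᶜ = Set.univ)
    (g : X → X → X)
    (hg1 : ∀ x₁ x₂ : X, x₁ ∈ S → x₂ ∈ S → g x₁ x₂ = f x₁ x₂)
    (hg2 : ∀ x₁ x₂ : X, x₁ ∉ S → g x₁ x₂ = γ x₁)
    (hg3 : ∀ x₁ x₂ : X, x₁ ∈ S → x₂ ∉ S → g x₁ x₂ = γ x₂) :
    ∀ g₁ g₂ : X → X,
      ((∃ c : X, ∀ x, g₁ x = c) ∨ #((Set.range g₁)ᶜ : Set X) < #X) →
      ((∃ c : X, ∀ x, g₂ x = c) ∨ #((Set.range g₂)ᶜ : Set X) < #X) →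
      ((∃ c : X, ∀ x, g (g₁ x) (g₂ x) = c) ∨
        #((Set.range fun x => g (g₁ x) (g₂ x))ᶜ : Set X) < #X) :=
  stmt_14_general S γ hγ g hg2 hg3
end

section
/- Let X be an infinite set of cardinality κ. If a conjugation-closed submonoid G of the full transformation monoid on X does not contain all permutations of X, then G is not a precomplete (maximal) submonoid: there exists a proper submonoid of X → X strictly containing G. Concretely: for α a permutation with large and co-large support and β a permutation with large and co-small support, β does not lie in the submonoid generated by G ∪ {α}, assuming G contains no permutation of large support. -/
open Cardinal

/-- Coerce a permutation into the full transformation monoid, with the type pinned. -/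
def permEnd {X : Type*} (σ : Equiv.Perm X) : Function.End X := ⇑σ

lemma permEnd_one {X : Type*} : permEnd (1 : Equiv.Perm X) = 1 := rfl

lemma permEnd_mul {X : Type*} (σ τ : Equiv.Perm X) :
    permEnd (σ * τ) = permEnd σ * permEnd τ := rfl

def conjEnd {X : Type*} (g : Function.End X) (γ : Equiv.Perm X) : Function.End X :=
  ⇑γ.symm ∘ g ∘ ⇑γ

lemma permEnd_apply {X : Type*} (σ : Equiv.Perm X) (x : X) : permEnd σ x = σ x := rfl

theorem stmt_18 {X : Type*} [Infinite X] (G : Set (Function.End X))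
    (hid : (1 : Function.End X) ∈ G)
    (hcomp : ∀ f ∈ G, ∀ g ∈ G, f * g ∈ G)
    (hconj : ∀ g ∈ G, ∀ γ : Equiv.Perm X,
      ((⇑γ.symm ∘ g ∘ ⇑γ : X → X) : Function.End X) ∈ G)
    (hnoperm : ∀ σ : Equiv.Perm X, (⇑σ : Function.End X) ∈ G → #{x : X | σ x ≠ x} < #X)
    (α β : Equiv.Perm X)
    (hα₁ : #{x : X | α x ≠ x} = #X) (hα₂ : #{x : X | α x = x} = #X)
    (hβ₁ : #{x : X | β x ≠ x} = #X) (hβ₂ : #{x : X | β x = x} < #X) :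
    (⇑β : Function.End X) ∉ Submonoid.closure (G ∪ {(⇑α : Function.End X)}) ∧
      (Submonoid.closure (G ∪ {(⇑α : Function.End X)}) : Set (Function.End X)) ≠
        Set.univ := by
  have hfix : ∀ (x : X), α x = x → ∀ n : ℕ, (α ^ n) x = x := by
    intro x hx n
    induction n with
    | zero => rfl
    | succ n ih => rw [pow_succ, Equiv.Perm.mul_apply, hx, ih]
  have key : ∀ f ∈ Submonoid.closure (G ∪ {(⇑α : Function.End X)}),
      ∃ (n : ℕ) (g : Function.End X), g ∈ G ∧ f = permEnd (α ^ n) * g := by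
    intro f hf
    induction hf using Submonoid.closure_induction with
    | mem x hx =>
      rcases hx with hx | hx
      · exact ⟨0, x, hx, by rw [pow_zero, permEnd_one, one_mul]⟩
      · refine ⟨1, 1, hid, ?_⟩
        rw [pow_one, mul_one, Set.mem_singleton_iff.mp hx]
        rfl
    | one => exact ⟨0, 1, hid, by rw [pow_zero, permEnd_one, one_mul]⟩
    | mul x y hx hy ihx ihy =>
      obtain ⟨n, g, hg, rfl⟩ := ihx
      obtain ⟨m, h, hh, rfl⟩ := ihy
      refine ⟨n + m, conjEnd g (α ^ m) * h,
        hcomp _ (hconj g hg (α ^ m)) _ hh, ?_⟩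
      have hswap : g * permEnd (α ^ m) =
          permEnd (α ^ m) * conjEnd g (α ^ m) := by
        funext x
        show g ((α ^ m) x) = (α ^ m) ((α ^ m).symm (g ((α ^ m) x)))
        rw [Equiv.apply_symm_apply]
      calc permEnd (α ^ n) * g * (permEnd (α ^ m) * h)
          = permEnd (α ^ n) * (g * permEnd (α ^ m)) * h := by
            rw [mul_assoc, mul_assoc, mul_assoc]
        _ = permEnd (α ^ (n + m)) *
            (conjEnd g (α ^ m) * h) := by
            rw [hswap, pow_add, permEnd_mul, mul_assoc, mul_assoc, mul_assoc]
  have hnot : (⇑β : Function.End X) ∉ Submonoid.closure (G ∪ {(⇑α : Function.End X)}) := by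
    intro hmem
    obtain ⟨n, g, hg, hgeq⟩ := key _ hmem
    have hgσ : g = (⇑((α ^ n)⁻¹ * β) : Function.End X) := by
      funext x
      have h1 : (α ^ n) (g x) = β x := by
        have h2 : (permEnd (α ^ n) * g) x = β x := by rw [← hgeq]
        exact h2
      show g x = ((α ^ n)⁻¹ * β) x
      rw [Equiv.Perm.mul_apply, ← h1, Equiv.Perm.inv_def, Equiv.symm_apply_apply]
    rw [hgσ] at hg
    have hlt := hnoperm _ hg
    have hsub : {x : X | α x = x} \ {x : X | β x = x} ⊆ {x : X | ((α ^ n)⁻¹ * β) x ≠ x} := by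
      rintro x ⟨hax, hbx⟩
      simp only [Set.mem_setOf_eq] at hax hbx ⊢
      intro hc
      apply hbx
      have h2 : (α ^ n) (((α ^ n)⁻¹ * β) x) = (α ^ n) x := by rw [hc]
      rw [Equiv.Perm.mul_apply, Equiv.Perm.inv_def, Equiv.apply_symm_apply, hfix x hax n] at h2
      exact h2
    have hbig : #X ≤ #({x : X | α x = x} \ {x : X | β x = x} : Set X) := by
      by_contra hcon
      push_neg at hcon
      have h1 : #({x : X | α x = x} : Set X) ≤
          #({x : X | α x = x} \ {x : X | β x = x} : Set X) + #({x : X | β x = x} : Set X) := by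
        refine le_trans (mk_le_mk_of_subset ?_) (mk_union_le _ _)
        intro x hx
        by_cases hb : β x = x
        · exact Or.inr hb
        · exact Or.inl ⟨hx, hb⟩
      rw [hα₂] at h1
      exact lt_irrefl _ (lt_of_le_of_lt h1
        (Cardinal.add_lt_of_lt (Cardinal.infinite_iff.mp ‹Infinite X›) hcon hβ₂))
    exact absurd hlt (not_lt.mpr (le_trans hbig (mk_le_mk_of_subset hsub)))
  refine ⟨hnot, ?_⟩
  intro heq
  have hmem : (⇑β : Function.End X) ∈
      (Submonoid.closure (G ∪ {(⇑α : Function.End X)}) : Set (Function.End X)) := by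
    rw [heq]; exact Set.mem_univ _
  exact hnot hmem
end
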